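/- Consider the switch graph with vertex set {C₀, C₁, …, C_n, A, B} (for n ≥ 0) defined by: s₀(C₀) = A; s₀(C_i) = C₀ for 1 ≤ i ≤ n; s₁(C_i) = C_{i+1} for 0 ≤ i < n; s₁(C_n) = B; s₀(A) = s₁(A) = C₀; s₀(B) = s₁(B) = B. Then the train run from C₀ visits A exactly 2^n times before first reaching B. -/

import Mathlib

open scoped Classical

variable {V : Type*}

/-- One step of the train: move along the edge given by the current switch state
and toggle the switch at the current vertex. -/
def step [DecidableEq V] (s0 s1 : V → V) (c : V × (V → Bool)) : V × (V → Bool) :=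
  (if c.2 c.1 then s1 c.1 else s0 c.1, Function.update c.2 c.1 (!c.2 c.1))

/-- The train run from `u`: iterate the step map starting with all switches `0`. -/
def run [DecidableEq V] (s0 s1 : V → V) (u : V) (k : ℕ) : V × (V → Bool) :=
  (step s0 s1)^[k] (u, fun _ => false)

/-- The train run from `u` visits `A` exactly `T` times before first reaching `B`. -/
def VisitsExactly [DecidableEq V] (s0 s1 : V → V) (u A B : V) (T : ℕ) : Prop :=
  ∃ N, (run s0 s1 u N).1 = B ∧ (∀ k < N, (run s0 s1 u k).1 ≠ B) ∧
    ((Finset.range N).filter (fun k => (run s0 s1 u k).1 = A)).card = T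

section Aux

variable {n : ℕ}

def stf (f : ℕ → Bool) (a : Bool) : Sum (Fin (n + 1)) Bool → Bool
  | .inl i => f i
  | .inr false => a
  | .inr true => false

lemma update_inl (f : ℕ → Bool) (a b : Bool) (j : Fin (n + 1)) :
    Function.update (stf f a) (Sum.inl j) b
      = stf (n := n) (fun i => if i = (j : ℕ) then b else f i) a := by
  funext v
  rcases v with i | c
  · rcases eq_or_ne i j with rfl | hne
    · simp [Function.update_self, stf]
    · rw [Function.update_of_ne (by simpa using hne)]
      have : (i : ℕ) ≠ (j : ℕ) := fun h => hne (Fin.ext h)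
      simp [stf, this]
  · rw [Function.update_of_ne (by simp)]; cases c <;> rfl

lemma stf_congr {n : ℕ} {f g : ℕ → Bool} {a : Bool} (h : ∀ i, f i = g i) :
    stf (n := n) f a = stf g a := by
  funext v
  rcases v with i | c
  · exact h i
  · cases c <;> rfl

lemma update_inrA (f : ℕ → Bool) (a b : Bool) :
    Function.update (stf (n := n) f a) (Sum.inr false) b = stf f b := by
  funext v
  rcases v with i | c
  · rw [Function.update_of_ne (by simp)]; rfl
  · cases c
    · simp [Function.update_self, stf]
    · rw [Function.update_of_ne (by simp)]; rfl

lemma testBit_add_one_of (r : ℕ) : ∀ m, (∀ i < r, Nat.testBit m i = true) →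
    Nat.testBit m r = false →
    ∀ i, Nat.testBit (m + 1) i
      = if i < r then false else if i = r then true else Nat.testBit m i := by
  induction r with
  | zero =>
    intro m _ h0 i
    have hm : m % 2 = 0 := by
      simp only [Nat.testBit_zero, decide_eq_false_iff_not] at h0; omega
    match i with
    | 0 => simp [Nat.testBit_zero]; omega
    | k + 1 =>
      have hdiv : (m + 1) / 2 = m / 2 := by omega
      simp [Nat.testBit_succ, hdiv]
  | succ r ih =>
    intro m hlt hr i
    have h0 : m % 2 = 1 := by
      have := hlt 0 (Nat.succ_pos r)
      simp only [Nat.testBit_zero, decide_eq_true_eq] at this; omega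
    have ht : ∀ i < r, Nat.testBit (m / 2) i = true := fun i hi => by
      rw [← Nat.testBit_succ]; exact hlt (i + 1) (by omega)
    have htr : Nat.testBit (m / 2) r = false := by
      rw [← Nat.testBit_succ]; exact hr
    have hdiv : (m + 1) / 2 = m / 2 + 1 := by omega
    match i with
    | 0 => simp [Nat.testBit_zero]; omega
    | k + 1 =>
      rw [Nat.testBit_succ, hdiv, ih (m / 2) ht htr k, Nat.testBit_succ]
      by_cases h1 : k < r
      · simp [h1, Nat.lt_succ_of_lt h1, Nat.succ_lt_succ h1]
      · by_cases h2 : k = r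
        · subst h2
          simp [h1]
        · have : ¬ k + 1 < r + 1 := by omega
          have : ¬ k + 1 = r + 1 := by omega
          simp_all

def aBit (m : ℕ) : Bool := Nat.testBit ((m + 1) / 2) 0

def conf (n m : ℕ) : Sum (Fin (n + 1)) Bool × (Sum (Fin (n + 1)) Bool → Bool) :=
  (Sum.inl 0, stf (Nat.testBit m) (aBit m))

variable (s0 s1 : Sum (Fin (n + 1)) Bool → Sum (Fin (n + 1)) Bool)

lemma chain (h3 : ∀ i : Fin (n + 1), ∀ h : (i : ℕ) < n,
      s1 (Sum.inl i) = Sum.inl ⟨(i : ℕ) + 1, Nat.succ_lt_succ h⟩)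
    (f : ℕ → Bool) (a : Bool) :
    ∀ j (hj : j ≤ n), (∀ i < j, f i = true) →
      (step s0 s1)^[j] (Sum.inl 0, stf f a)
        = (Sum.inl ⟨j, by omega⟩, stf (fun i => if i < j then false else f i) a) := by
  intro j
  induction j with
  | zero =>
    intro _ _
    simp only [Function.iterate_zero, id]
    refine Prod.ext (by simp) ?_
    exact (stf_congr (fun i => by simp)).symm
  | succ j ih =>
    intro hj hf
    have hj' : j ≤ n := Nat.le_of_succ_le hj
    rw [Function.iterate_succ_apply', ih hj' (fun i hi => hf i (Nat.lt_succ_of_lt hi))]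
    have hs1 : s1 (Sum.inl ⟨j, by omega⟩) = Sum.inl ⟨j + 1, by omega⟩ := by
      have := h3 ⟨j, by omega⟩ (by simpa using Nat.lt_of_succ_le hj)
      simpa using this
    have hval : stf (n := n) (fun i => if i < j then false else f i) a
        (Sum.inl ⟨j, by omega⟩) = true := by
      simp [stf, hf j (Nat.lt_succ_self j)]
    refine Prod.ext ?_ ?_
    · simp only [step, hval, if_true]
      exact hs1
    · simp only [step, hval, Bool.not_true]
      rw [update_inl]
      refine stf_congr ?_
      intro i
      simp only [Fin.val_mk] -- (↑⟨j,_⟩ : ℕ) = j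
      by_cases h1 : i = j
      · simp [h1]
      · by_cases h2 : i < j
        · simp [h1, h2, Nat.lt_succ_of_lt h2]
        · have h3' : ¬ i < j + 1 := by omega
          simp [h1, h2, h3']


lemma seg_even (h1 : s0 (Sum.inl 0) = Sum.inr false)
    (h5 : s0 (Sum.inr false) = Sum.inl 0) (h6 : s1 (Sum.inr false) = Sum.inl 0)
    (m : ℕ) (hm : m % 2 = 0) :
    (step s0 s1)^[2] (conf n m) = conf n (m + 1) ∧
    ((step s0 s1)^[1] (conf n m)).1 = Sum.inr false := by
  have hb0 : Nat.testBit m 0 = false := by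
    simp only [Nat.testBit_zero, decide_eq_false_iff_not]; omega
  have hv : stf (n := n) (Nat.testBit m) (aBit m) (Sum.inl 0) = false := by
    simpa [stf] using hb0
  set f' : ℕ → Bool := fun i => if i = (0 : ℕ) then true else Nat.testBit m i with hf'
  have e1 : step s0 s1 (conf n m) = (Sum.inr false, stf f' (aBit m)) := by
    simp only [conf, step, hv, Bool.not_false, Bool.false_eq_true, if_false, h1, update_inl]
    rw [Prod.mk.injEq]
    exact ⟨rfl, stf_congr fun i => by simp [hf']; by_cases h : i = 0 <;> simp [h]⟩
  have e2 : step s0 s1 (Sum.inr false, stf (n := n) f' (aBit m))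
      = (Sum.inl 0, stf f' (!aBit m)) := by
    refine Prod.ext ?_ ?_
    · cases haB : aBit m <;> simp [step, stf, h5, h6, haB]
    · show Function.update (stf (n := n) f' (aBit m)) (Sum.inr false)
        (!(stf (n := n) f' (aBit m) (Sum.inr false))) = _
      exact update_inrA f' (aBit m) (!(aBit m))
  have hfbits : stf (n := n) f' (!aBit m) = stf (Nat.testBit (m + 1)) (aBit (m + 1)) := by
    have ha : (!(aBit m)) = aBit (m + 1) := by
      have e : (m + 2) / 2 = (m + 1) / 2 + 1 := by omega
      simp only [aBit, Nat.testBit_zero, e]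
      rcases Nat.mod_two_eq_zero_or_one ((m + 1) / 2) with h | h <;>
        simp [Nat.add_mod, h]
    rw [ha]
    refine stf_congr fun i => ?_
    rw [testBit_add_one_of 0 m (by omega) hb0 i]
    simp [hf']
  constructor
  · show step s0 s1 (step s0 s1 (conf n m)) = _
    rw [e1, e2, conf, hfbits]
  · show (step s0 s1 (conf n m)).1 = _
    rw [e1]

lemma seg_odd (h2 : ∀ i : Fin (n + 1), i ≠ 0 → s0 (Sum.inl i) = Sum.inl 0)
    (h3 : ∀ i : Fin (n + 1), ∀ h : (i : ℕ) < n,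
      s1 (Sum.inl i) = Sum.inl ⟨(i : ℕ) + 1, Nat.succ_lt_succ h⟩)
    (m : ℕ) (hm : m % 2 = 1) (hlt : m + 1 < 2 ^ (n + 1)) :
    ∃ r, 1 ≤ r ∧ r ≤ n ∧
      (∀ k ≤ r, ∃ jj : Fin (n + 1),
        ((step s0 s1)^[k] (conf n m)).1 = Sum.inl jj) ∧
      (step s0 s1)^[r + 1] (conf n m) = conf n (m + 1) := by
  have hex : ∃ i, Nat.testBit m i = false :=
    ⟨n + 1, Nat.testBit_lt_two_pow (by omega)⟩
  set r := Nat.find hex with hrdef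
  have hr : Nat.testBit m r = false := Nat.find_spec hex
  have hmin : ∀ i < r, Nat.testBit m i = true := fun i hi => by
    have := Nat.find_min hex hi
    simpa using this
  have hb0 : Nat.testBit m 0 = true := by
    simp only [Nat.testBit_zero, decide_eq_true_eq]; omega
  have hr1 : 1 ≤ r := by
    rcases Nat.eq_zero_or_pos r with h | h
    · rw [h] at hr; rw [hb0] at hr; exact absurd hr (by simp)
    · exact h
  have hrn : r ≤ n := by
    by_contra hc
    push_neg at hc
    have hall : m = 2 ^ (n + 1) - 1 := by
      apply Nat.eq_of_testBit_eq
      intro i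
      rw [Nat.testBit_two_pow_sub_one]
      by_cases hi : i < n + 1
      · simp [hmin i (by omega), hi]
      · have h2i : 2 ^ (n + 1) ≤ 2 ^ i := Nat.pow_le_pow_right (by omega) (by omega)
        have : Nat.testBit m i = false := Nat.testBit_lt_two_pow (by omega)
        simp [this, hi]
    omega
  have hchain := chain s0 s1 h3 (Nat.testBit m) (aBit m)
  refine ⟨r, hr1, hrn, ?_, ?_⟩
  · intro k hk
    rw [show conf n m = (Sum.inl 0, stf (Nat.testBit m) (aBit m)) from rfl,
      hchain k (le_trans hk hrn) (fun i hi => hmin i (lt_of_lt_of_le hi hk))]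
    exact ⟨_, rfl⟩
  · rw [show conf n m = (Sum.inl 0, stf (Nat.testBit m) (aBit m)) from rfl,
      Function.iterate_succ_apply', hchain r hrn hmin]
    have hval : stf (n := n) (fun i => if i < r then false else Nat.testBit m i) (aBit m)
        (Sum.inl ⟨r, by omega⟩) = false := by
      simp [stf, hr]
    have hs0 : s0 (Sum.inl (⟨r, by omega⟩ : Fin (n + 1))) = Sum.inl 0 := by
      refine h2 _ ?_
      simp only [ne_eq, Fin.ext_iff, Fin.val_zero]
      omega
    refine Prod.ext ?_ ?_
    · simp only [step, hval, Bool.false_eq_true, if_false]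
      exact hs0
    · simp only [step, hval, Bool.not_false]
      rw [update_inl]
      show _ = stf (Nat.testBit (m + 1)) (aBit (m + 1))
      have ha : aBit m = aBit (m + 1) := by
        have e : (m + 2) / 2 = (m + 1) / 2 := by omega
        simp only [aBit, e]
      rw [← ha]
      refine stf_congr fun i => ?_
      rw [testBit_add_one_of r m hmin hr i]
      simp only [Fin.val_mk]
      by_cases h1' : i = r
      · simp [h1']
      · by_cases h2' : i < r <;> simp [h1', h2']

lemma seg_final (h3 : ∀ i : Fin (n + 1), ∀ h : (i : ℕ) < n,
      s1 (Sum.inl i) = Sum.inl ⟨(i : ℕ) + 1, Nat.succ_lt_succ h⟩)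
    (h4 : s1 (Sum.inl ⟨n, Nat.lt_succ_self n⟩) = Sum.inr true) :
    (∀ k ≤ n, ∃ jj : Fin (n + 1),
      ((step s0 s1)^[k] (conf n (2 ^ (n + 1) - 1))).1 = Sum.inl jj) ∧
    ((step s0 s1)^[n + 1] (conf n (2 ^ (n + 1) - 1))).1 = Sum.inr true := by
  have hbit : ∀ i ≤ n, Nat.testBit (2 ^ (n + 1) - 1) i = true := fun i hi => by
    rw [Nat.testBit_two_pow_sub_one]
    simp [Nat.lt_succ_of_le hi]
  have hchain := chain s0 s1 h3 (Nat.testBit (2 ^ (n + 1) - 1)) (aBit (2 ^ (n + 1) - 1))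
  constructor
  · intro k hk
    rw [show conf n (2 ^ (n + 1) - 1)
        = (Sum.inl 0, stf (Nat.testBit (2 ^ (n + 1) - 1)) (aBit (2 ^ (n + 1) - 1))) from rfl,
      hchain k hk (fun i hi => hbit i (by omega))]
    exact ⟨_, rfl⟩
  · rw [show conf n (2 ^ (n + 1) - 1)
        = (Sum.inl 0, stf (Nat.testBit (2 ^ (n + 1) - 1)) (aBit (2 ^ (n + 1) - 1))) from rfl,
      Function.iterate_succ_apply', hchain n le_rfl (fun i hi => hbit i (by omega))]
    have hval : stf (n := n)
        (fun i => if i < n then false else Nat.testBit (2 ^ (n + 1) - 1) i)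
        (aBit (2 ^ (n + 1) - 1)) (Sum.inl ⟨n, by omega⟩) = true := by
      simp [stf, hbit n le_rfl]
    simp only [step, hval, if_true]
    exact h4


lemma filter_range_eq_of (p : ℕ → Prop) [DecidablePred p] (N M : ℕ) (hNM : N ≤ M)
    (h : ∀ k, N ≤ k → k < M → ¬ p k) :
    (Finset.range M).filter p = (Finset.range N).filter p := by
  ext x
  simp only [Finset.mem_filter, Finset.mem_range]
  constructor
  · rintro ⟨hx, hp⟩
    refine ⟨?_, hp⟩
    by_contra h'
    exact h x (by omega) hx hp
  · rintro ⟨hx, hp⟩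
    exact ⟨by omega, hp⟩

lemma accum (h1 : s0 (Sum.inl 0) = Sum.inr false)
    (h2 : ∀ i : Fin (n + 1), i ≠ 0 → s0 (Sum.inl i) = Sum.inl 0)
    (h3 : ∀ i : Fin (n + 1), ∀ h : (i : ℕ) < n,
      s1 (Sum.inl i) = Sum.inl ⟨(i : ℕ) + 1, Nat.succ_lt_succ h⟩)
    (h5 : s0 (Sum.inr false) = Sum.inl 0) (h6 : s1 (Sum.inr false) = Sum.inl 0) :
    ∀ m, m < 2 ^ (n + 1) → ∃ N,
      (step s0 s1)^[N] (conf n 0) = conf n m ∧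
      (∀ k < N, ((step s0 s1)^[k] (conf n 0)).1 ≠ Sum.inr true) ∧
      ((Finset.range N).filter
        (fun k => ((step s0 s1)^[k] (conf n 0)).1 = Sum.inr false)).card = (m + 1) / 2 := by
  intro m
  induction m with
  | zero => exact fun _ => ⟨0, rfl, fun k hk => absurd hk (by omega), by simp⟩
  | succ m ih =>
    intro hm1
    obtain ⟨N, hN, hB, hC⟩ := ih (by omega)
    have key : ∀ k, (step s0 s1)^[N + k] (conf n 0) = (step s0 s1)^[k] (conf n m) := by
      intro k
      rw [show N + k = k + N by omega, Function.iterate_add_apply, hN]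
    rcases Nat.mod_two_eq_zero_or_one m with he | ho
    · -- even case
      obtain ⟨e2, e1pos⟩ := seg_even s0 s1 h1 h5 h6 m he
      have hpN : ((step s0 s1)^[N] (conf n 0)).1 = Sum.inl 0 := by rw [hN]; rfl
      have hpN1 : ((step s0 s1)^[N + 1] (conf n 0)).1 = Sum.inr false := by
        rw [key 1]; exact e1pos
      refine ⟨N + 2, ?_, ?_, ?_⟩
      · rw [key 2, e2]
      · intro k hk
        rcases Nat.lt_or_ge k N with h' | h'
        · exact hB k h'
        · rcases (by omega : k = N ∨ k = N + 1) with rfl | rfl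
          · rw [hpN]; simp
          · rw [hpN1]; simp
      · rw [show N + 2 = (N + 1) + 1 from rfl, Finset.range_add_one, Finset.filter_insert,
          if_pos hpN1, Finset.range_add_one, Finset.filter_insert, if_neg (by rw [hpN]; simp),
          Finset.card_insert_of_notMem (by simp), hC]
        omega
    · -- odd case
      obtain ⟨r, hr1, hrn, hpos, hend⟩ := seg_odd s0 s1 h2 h3 m ho hm1
      refine ⟨N + (r + 1), ?_, ?_, ?_⟩
      · rw [key (r + 1), hend]
      · intro k hk
        rcases Nat.lt_or_ge k N with h' | h'
        · exact hB k h'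
        · obtain ⟨j, rfl⟩ : ∃ j, k = N + j := ⟨k - N, by omega⟩
          obtain ⟨jj, hjj⟩ := hpos j (by omega)
          rw [key j, hjj]
          simp
      · rw [filter_range_eq_of _ N (N + (r + 1)) (by omega) ?_ , hC]
        · omega
        · intro k hk1 hk2
          obtain ⟨j, rfl⟩ : ∃ j, k = N + j := ⟨k - N, by omega⟩
          obtain ⟨jj, hjj⟩ := hpos j (by omega)
          rw [key j, hjj]
          simp

end Aux

/-- The binary-counter switch graph: vertices `C₀, …, C_n` (coded `Sum.inl i`),
`A` (coded `Sum.inr false`) and `B` (coded `Sum.inr true`); the train from `C₀`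
visits `A` exactly `2 ^ n` times before first reaching `B`. -/
theorem counter_visits_pow_two (n : ℕ)
    (s0 s1 : Sum (Fin (n + 1)) Bool → Sum (Fin (n + 1)) Bool)
    (h1 : s0 (Sum.inl 0) = Sum.inr false)
    (h2 : ∀ i : Fin (n + 1), i ≠ 0 → s0 (Sum.inl i) = Sum.inl 0)
    (h3 : ∀ i : Fin (n + 1), ∀ h : (i : ℕ) < n,
      s1 (Sum.inl i) = Sum.inl ⟨(i : ℕ) + 1, by omega⟩)
    (h4 : s1 (Sum.inl ⟨n, Nat.lt_succ_self n⟩) = Sum.inr true)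
    (h5 : s0 (Sum.inr false) = Sum.inl 0) (h6 : s1 (Sum.inr false) = Sum.inl 0)
    (h7 : s0 (Sum.inr true) = Sum.inr true) (h8 : s1 (Sum.inr true) = Sum.inr true) :
    VisitsExactly s0 s1 (Sum.inl 0) (Sum.inr false) (Sum.inr true) (2 ^ n) := by
  have hstart : ((Sum.inl 0 : Sum (Fin (n + 1)) Bool), fun _ => false) = conf n 0 := by
    rw [Prod.mk.injEq]
    refine ⟨rfl, ?_⟩
    funext v
    rcases v with i | c
    · simp [conf, stf]
    · cases c <;> simp [conf, stf, aBit]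
  have hrun : ∀ k, run s0 s1 (Sum.inl 0) k = (step s0 s1)^[k] (conf n 0) := fun k => by
    rw [run, hstart]
  have hpow : 2 ^ (n + 1) = 2 * 2 ^ n := by ring
  obtain ⟨N, hN, hB, hC⟩ := accum s0 s1 h1 h2 h3 h5 h6 (2 ^ (n + 1) - 1) (by have := Nat.two_pow_pos (n + 1); omega)
  obtain ⟨hposes, hfinal⟩ := seg_final s0 s1 h3 h4
  have key : ∀ k, (step s0 s1)^[N + k] (conf n 0) = (step s0 s1)^[k] (conf n (2 ^ (n + 1) - 1)) := by
    intro k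
    rw [show N + k = k + N by omega, Function.iterate_add_apply, hN]
  refine ⟨N + (n + 1), ?_, ?_, ?_⟩
  · rw [hrun, key (n + 1)]
    exact hfinal
  · intro k hk
    rw [hrun]
    rcases Nat.lt_or_ge k N with h' | h'
    · exact hB k h'
    · obtain ⟨j, rfl⟩ : ∃ j, k = N + j := ⟨k - N, by omega⟩
      obtain ⟨jj, hjj⟩ := hposes j (by omega)
      rw [key j, hjj]
      simp
  · simp only [hrun]
    rw [filter_range_eq_of _ N (N + (n + 1)) (by omega) ?_, hC]
    · omega
    · intro k hk1 hk2
      obtain ⟨j, rfl⟩ : ∃ j, k = N + j := ⟨k - N, by omega⟩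
      obtain ⟨jj, hjj⟩ := hposes j (by omega)
      rw [key j, hjj]
      simp
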